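/- Let m ≥ 4 be an integer, let B_m(3) be the (m−1)×(m−1) real matrix defined below, and let Δ(m) = ∑_{k=0}^{m} [binom(m,k) / (k·λ₁ + (m−k)·λ₂ − (m−4))] · (λ₂/√17)^k · (−λ₁/√17)^{m−k}, where λ₁ = (3−√17)/2 and λ₂ = (3+√17)/2. Then det B_m(3) ≠ 0 if and only if (−4/3)·(m−3)·Δ(m) ≠ 1 (i.e. if and only if Δ(m)^{−1} ≠ −(4/3)(m−3)). -/

import Mathlib

/-!
Read from the bottom, rows `1, …, m - 2` of `B_m(3)` are a three-term linear recurrence with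
nonvanishing leading coefficient, so the vectors they annihilate form a line. It is spanned by the
reversed coefficients of `(1 - λ₁X) ^ A (1 - λ₂X) ^ (m - A)`, `A = (mλ₂ - 2m - 4) / √17`: this
product satisfies `(1 - λ₁X)(1 - λ₂X) F' = -(2m + 4 + 2mX) F`, whose coefficientwise form is that
recurrence. Hence `det B_m(3) = 0` iff the first row annihilates this vector too.

The first-row sum telescopes along the recurrence to a combination of the coefficients of `X ^ m`
and `X ^ (m + 1)`. Since the two exponents add up to `m`, their product is a multiple of the
nonzero number `A (A - 1) ⋯ (A - m)` (`√17` is irrational): for `X ^ (m + 1)` the cofactor is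
`(λ₂ - λ₁) ^ (m + 1)` by the binomial theorem, for `X ^ m` it is `-(λ₂ - λ₁) ^ (m + 1) Δ(m)`.
-/

/-- The matrix `B_m(3)` of the paper: `(m-1) × (m-1)`, first row
`(B_m(3))_{0,j} = j + 3`, and for `1 ≤ i ≤ m-2`: `(B_m(3))_{i,i-1} = m - 1 - i`,
`(B_m(3))_{i,i} = 3i + 10 - m`, `(B_m(3))_{i,i+1} = 2(i+3)`, all other entries `0`. -/
noncomputable def paperB3 (m : ℕ) : Matrix (Fin (m - 1)) (Fin (m - 1)) ℝ :=
  Matrix.of fun i j =>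
    if (i : ℕ) = 0 then ((j : ℕ) : ℝ) + 3
    else if (i : ℕ) = (j : ℕ) then 3 * ((i : ℕ) : ℝ) + 10 - (m : ℝ)
    else if (i : ℕ) = (j : ℕ) + 1 then (m : ℝ) - 1 - ((i : ℕ) : ℝ)
    else if (j : ℕ) = (i : ℕ) + 1 then 2 * (((i : ℕ) : ℝ) + 3)
    else 0

/-- The quantity `Δ(m)` of the paper, with `λ₁ = (3-√17)/2` and
`λ₂ = (3+√17)/2` (so `λ₂ - λ₁ = √17`). -/
noncomputable def paperDelta (m : ℕ) : ℝ :=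
  ∑ k ∈ Finset.range (m + 1),
    (Nat.choose m k : ℝ) /
        ((k : ℝ) * ((3 - Real.sqrt 17) / 2) + ((m : ℝ) - (k : ℝ)) * ((3 + Real.sqrt 17) / 2)
          - ((m : ℝ) - 4)) *
      (((3 + Real.sqrt 17) / 2) / Real.sqrt 17) ^ k *
      ((-((3 - Real.sqrt 17) / 2)) / Real.sqrt 17) ^ (m - k)

open Finset PowerSeries Matrix

section BinomialSeries

variable {K : Type*} [Field K]

theorem PowerSeries.coeff_X_mul_derivative {R : Type*} [CommSemiring R] (f : R⟦X⟧) (n : ℕ) :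
    coeff n (X * d⁄dX R f) = n * coeff n f := by
  cases n with
  | zero => simp
  | succ n => rw [coeff_succ_X_mul, coeff_derivative, mul_comm, Nat.cast_succ]

theorem descPochhammer_eval_mul_eval_of_add_eq {R : Type*} [CommRing R] {a b : R} {n : ℕ}
    (hab : a + b = n) (k j : ℕ) (hkj : k + j = n + 1) :
    (descPochhammer R k).eval a * (descPochhammer R j).eval b
      = (-1) ^ j * (descPochhammer R (n + 1)).eval a := by
  induction j generalizing k with
  | zero => simp_all
  | succ j ih =>
    have hkj' : (k : R) + j = n := by rw [← Nat.cast_add]; exact congrArg _ (by omega)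
    have ih' := ih (k + 1) (by omega)
    rw [descPochhammer_succ_eval] at ih' ⊢
    linear_combination (-1) * ih' + (descPochhammer R k).eval a * (descPochhammer R j).eval b
      * (hab - hkj')

/-- The power series `(1 + s X) ^ a`. -/
noncomputable def binomSeries (a s : K) : K⟦X⟧ :=
  mk fun k => (descPochhammer K k).eval a / k.factorial * s ^ k

theorem coeff_binomSeries (a s : K) (k : ℕ) :
    coeff k (binomSeries a s) = (descPochhammer K k).eval a / k.factorial * s ^ k :=
  coeff_mk _ _

theorem succ_mul_coeff_binomSeries_succ [CharZero K] (a s : K) (k : ℕ) :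
    (k + 1) * coeff (k + 1) (binomSeries a s) = s * (a - k) * coeff k (binomSeries a s) := by
  simp only [coeff_binomSeries, descPochhammer_succ_eval, Nat.factorial_succ, Nat.cast_mul,
    pow_succ]
  field_simp
  push_cast
  ring

theorem one_add_mul_derivative_binomSeries [CharZero K] (a s : K) :
    (1 + C s * X) * d⁄dX K (binomSeries a s) = C (a * s) * binomSeries a s := by
  ext n
  rw [add_mul, one_mul, mul_assoc, map_add, coeff_C_mul, coeff_X_mul_derivative,
    coeff_derivative, coeff_C_mul]
  linear_combination succ_mul_coeff_binomSeries_succ a s n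

theorem derivative_binomSeries_mul [CharZero K] (a b s u : K) :
    d⁄dX K (binomSeries a s * binomSeries b u)
      + C (s + u) * (X * d⁄dX K (binomSeries a s * binomSeries b u))
      + C (s * u) * (X * (X * d⁄dX K (binomSeries a s * binomSeries b u)))
      = C (a * s + b * u) * (binomSeries a s * binomSeries b u)
        + C ((a + b) * (s * u)) * (X * (binomSeries a s * binomSeries b u)) := by
  have hP := one_add_mul_derivative_binomSeries a s
  have hQ := one_add_mul_derivative_binomSeries b u
  simp only [Derivation.leibniz, smul_eq_mul, map_add C, map_mul C] at hP hQ ⊢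
  linear_combination (1 + C u * X) * binomSeries b u * hP + (1 + C s * X) * binomSeries a s * hQ

theorem coeff_zero_binomSeries_mul (a b s u : K) :
    coeff 0 (binomSeries a s * binomSeries b u) = 1 := by
  simp [coeff_mul, coeff_binomSeries]

theorem coeff_one_binomSeries_mul [CharZero K] (a b s u : K) :
    coeff 1 (binomSeries a s * binomSeries b u) = a * s + b * u := by
  have h := congrArg (coeff 0) (derivative_binomSeries_mul a b s u)
  simp only [map_add (coeff _), coeff_C_mul, coeff_zero_X_mul, coeff_derivative,
    coeff_zero_binomSeries_mul] at h
  linear_combination h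

theorem coeff_binomSeries_mul_recurrence [CharZero K] (a b s u : K) (n : ℕ) :
    (n + 2) * coeff (n + 2) (binomSeries a s * binomSeries b u)
      + ((s + u) * (n + 1) - (a * s + b * u)) * coeff (n + 1) (binomSeries a s * binomSeries b u)
      + s * u * (n - (a + b)) * coeff n (binomSeries a s * binomSeries b u) = 0 := by
  have h := congrArg (coeff (n + 1)) (derivative_binomSeries_mul a b s u)
  simp only [map_add (coeff _), coeff_C_mul, coeff_succ_X_mul, coeff_derivative,
    coeff_X_mul_derivative] at h
  push_cast at h
  linear_combination h

theorem coeff_succ_binomSeries_mul_of_add_eq [CharZero K] {a b : K} {n : ℕ} (hab : a + b = n)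
    (s u : K) :
    coeff (n + 1) (binomSeries a s * binomSeries b u)
      = (descPochhammer K (n + 1)).eval a / (n + 1).factorial * (s - u) ^ (n + 1) := by
  rw [coeff_mul, Finset.Nat.sum_antidiagonal_eq_sum_range_succ_mk, sub_eq_add_neg, add_pow,
    Finset.mul_sum]
  refine sum_congr rfl fun k hk => ?_
  have hk : k ≤ n + 1 := Nat.lt_succ_iff.mp (mem_range.mp hk)
  have hprod := descPochhammer_eval_mul_eval_of_add_eq hab k (n + 1 - k) (by omega)
  rw [coeff_binomSeries, coeff_binomSeries, Nat.cast_choose K hk, neg_pow]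
  dsimp only
  field_simp
  rw [div_eq_div_iff (by simp [Nat.factorial_ne_zero]) (by simp [Nat.factorial_ne_zero])]
  linear_combination (s ^ k * u ^ (n + 1 - k) * k.factorial * (n + 1 - k).factorial
    * (n + 1).factorial) * hprod

theorem coeff_binomSeries_mul_of_add_eq [CharZero K] {a b : K} {n : ℕ} (hab : a + b = n)
    (ha : ∀ k ≤ n, a ≠ k) (s u : K) :
    coeff n (binomSeries a s * binomSeries b u)
      = (descPochhammer K (n + 1)).eval a / n.factorial
        * ∑ k ∈ range (n + 1), n.choose k * s ^ k * (-u) ^ (n - k) / (a - k) := by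
  rw [coeff_mul, Finset.Nat.sum_antidiagonal_eq_sum_range_succ_mk, Finset.mul_sum]
  refine sum_congr rfl fun k hk => ?_
  have hk : k ≤ n := Nat.lt_succ_iff.mp (mem_range.mp hk)
  have hprod := descPochhammer_eval_mul_eval_of_add_eq hab k (n - k + 1) (by omega)
  have hak : a - k ≠ 0 := sub_ne_zero.mpr (ha k hk)
  have hb : b - (n - k : ℕ) = -(a - k) := by
    rw [Nat.cast_sub hk]; linear_combination hab
  rw [descPochhammer_succ_eval, hb] at hprod
  rw [coeff_binomSeries, coeff_binomSeries, Nat.cast_choose K hk, neg_pow]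
  dsimp only
  field_simp
  rw [div_eq_div_iff (by simp [Nat.factorial_ne_zero]) (by simp [Nat.factorial_ne_zero])]
  linear_combination (-s ^ k * u ^ (n - k) * k.factorial * (n - k).factorial
    * n.factorial) * hprod

end BinomialSeries

theorem Matrix.det_eq_zero_iff_mulVec_apply_eq_zero {n K : Type*} [Fintype n] [DecidableEq n]
    [Field K] (M : Matrix n n K) {i₀ : n} {u : n → K} (hu : u ≠ 0)
    (hMu : ∀ i ≠ i₀, (M *ᵥ u) i = 0)
    (hspan : ∀ z, (∀ i ≠ i₀, (M *ᵥ z) i = 0) → ∃ c : K, z = c • u) :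
    M.det = 0 ↔ (M *ᵥ u) i₀ = 0 := by
  constructor
  · intro hdet
    obtain ⟨z, hz, hMz⟩ := Matrix.exists_mulVec_eq_zero_iff.mpr hdet
    obtain ⟨c, rfl⟩ := hspan z fun i _ => by rw [hMz]; rfl
    have hc : c ≠ 0 := by rintro rfl; exact hz (zero_smul K u)
    have h := congrFun hMz i₀
    rw [Matrix.mulVec_smul, Pi.smul_apply, smul_eq_mul, Pi.zero_apply] at h
    exact (mul_eq_zero.mp h).resolve_left hc
  · intro h₀
    refine Matrix.exists_mulVec_eq_zero_iff.mp ⟨u, hu, funext fun i => ?_⟩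
    by_cases hi : i = i₀
    · rw [hi, h₀, Pi.zero_apply]
    · exact hMu i hi

theorem eq_of_linear_recurrence {K : Type*} [Field K] {p q r f g : ℕ → K} {N : ℕ}
    (hp : ∀ n, n + 2 ≤ N → p n ≠ 0)
    (hf : ∀ n, n + 2 ≤ N → p n * f (n + 2) + q n * f (n + 1) + r n * f n = 0)
    (hg : ∀ n, n + 2 ≤ N → p n * g (n + 2) + q n * g (n + 1) + r n * g n = 0)
    (h₀ : f 0 = g 0) (h₁ : f 1 = g 1) : ∀ k ≤ N, f k = g k := by
  intro k
  induction k using Nat.twoStepInduction with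
  | zero => exact fun _ => h₀
  | one => exact fun _ => h₁
  | more n ih ih' =>
    intro hn
    apply mul_left_cancel₀ (hp n hn)
    linear_combination hf n hn - hg n hn - q n * ih' (by omega) - r n * ih (by omega)

namespace PaperB3

noncomputable def lam₁ : ℝ := (3 - √17) / 2

noncomputable def lam₂ : ℝ := (3 + √17) / 2

theorem lam₁_add_lam₂ : lam₁ + lam₂ = 3 := by unfold lam₁ lam₂; ring

theorem lam₁_mul_lam₂ : lam₁ * lam₂ = -2 := by
  unfold lam₁ lam₂; linear_combination (-1 / 4 : ℝ) * Real.sq_sqrt (show (0 : ℝ) ≤ 17 by norm_num)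

theorem lam₂_sub_lam₁ : lam₂ - lam₁ = √17 := by unfold lam₁ lam₂; ring

/-- The exponent `A` for which `(1 - λ₁ X) ^ A (1 - λ₂ X) ^ (m - A)` generates the kernel of the
last `m - 2` rows of `B_m(3)`; it is fixed by `A λ₁ + (m - A) λ₂ = 2m + 4`. -/
noncomputable def exponent (m : ℕ) : ℝ := (m * lam₂ - (2 * m + 4)) / √17

theorem exponent_mul_sqrt (m : ℕ) : exponent m * √17 = m * lam₂ - (2 * m + 4) :=
  div_mul_cancel₀ _ (by positivity)

theorem exponent_mul_lam₁_add (m : ℕ) :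
    exponent m * lam₁ + (m - exponent m) * lam₂ = 2 * m + 4 := by
  linear_combination -exponent_mul_sqrt m - exponent m * lam₂_sub_lam₁

theorem exponent_ne_natCast (m k : ℕ) : exponent m ≠ k := by
  intro hk
  have h : ((m - 2 * k : ℤ) : ℝ) * √17 = (m + 8 : ℕ) := by
    have := exponent_mul_sqrt m
    rw [hk, lam₂] at this
    push_cast
    linear_combination -2 * this
  by_cases hmk : (m - 2 * k : ℤ) = 0
  · rw [hmk, Int.cast_zero, zero_mul] at h
    exact absurd h.symm (by positivity)
  · have hirr : Irrational √17 := by simpa using (by norm_num : Nat.Prime 17).irrational_sqrt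
    exact (hirr.intCast_mul hmk).ne_nat _ h

noncomputable def kernelSeries (m : ℕ) : ℝ⟦X⟧ :=
  binomSeries (exponent m) (-lam₁) * binomSeries (m - exponent m) (-lam₂)

theorem coeff_zero_kernelSeries (m : ℕ) : coeff 0 (kernelSeries m) = 1 :=
  coeff_zero_binomSeries_mul _ _ _ _

theorem coeff_one_kernelSeries (m : ℕ) : coeff 1 (kernelSeries m) = -(2 * m + 4) := by
  rw [kernelSeries, coeff_one_binomSeries_mul]
  linear_combination -exponent_mul_lam₁_add m

theorem coeff_kernelSeries_recurrence (m n : ℕ) :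
    (n + 2) * coeff (n + 2) (kernelSeries m) + (2 * m + 1 - 3 * n) * coeff (n + 1) (kernelSeries m)
      + 2 * (m - n) * coeff n (kernelSeries m) = 0 := by
  have h := coeff_binomSeries_mul_recurrence (exponent m) (m - exponent m) (-lam₁) (-lam₂) n
  rw [← kernelSeries] at h
  linear_combination h + coeff (n + 1) (kernelSeries m) * ((n + 1) * lam₁_add_lam₂
    - exponent_mul_lam₁_add m) - (n - m) * coeff n (kernelSeries m) * lam₁_mul_lam₂

/-- Shifted by one, so that `kernelSeq m 0 = 0` is the vanishing entry that
`mulVec_paperB3_rev_apply` asks for. -/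
noncomputable def kernelSeq (m k : ℕ) : ℝ := coeff k (X * kernelSeries m)

theorem kernelSeq_recurrence (m n : ℕ) :
    (n + 1) * kernelSeq m (n + 2) + (2 * m + 4 - 3 * n) * kernelSeq m (n + 1)
      + 2 * (m + 1 - n) * kernelSeq m n = 0 := by
  cases n with
  | zero =>
    simp only [kernelSeq, coeff_succ_X_mul, coeff_zero_X_mul, coeff_one_kernelSeries,
      coeff_zero_kernelSeries]
    ring
  | succ n =>
    simp only [kernelSeq, coeff_succ_X_mul]
    push_cast
    linear_combination coeff_kernelSeries_recurrence m n

theorem sum_range_mul_coeff_kernelSeries (m : ℕ) (hm : 1 ≤ m) :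
    ∑ r ∈ range (m - 1), ((m : ℝ) + 1 - r) * coeff r (kernelSeries m)
      = 3 / 4 * (m + 1) * coeff (m + 1) (kernelSeries m) - (m - 3) * coeff m (kernelSeries m) := by
  obtain ⟨m, rfl⟩ := Nat.exists_eq_add_of_le' hm
  set f := fun r => coeff r (kernelSeries (m + 1))
  let t r : ℝ := (((m : ℝ) + 1 - r) / 2 + 1) * f r + ((r + 1) / 4) * f (r + 1)
  have htel : ∀ r, ((m : ℝ) + 2 - r) * f r = t r - t (r + 1) := fun r => by
    have := coeff_kernelSeries_recurrence (m + 1) r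
    push_cast at this
    simp only [t]
    push_cast
    linear_combination (1 / 4 : ℝ) * this
  have h₀ : f 0 = 1 := coeff_zero_kernelSeries _
  have h₁ : f 1 = -(2 * (m + 1) + 4) := by
    simp only [f]; rw [coeff_one_kernelSeries]; push_cast; ring
  have hrec := coeff_kernelSeries_recurrence (m + 1) m
  push_cast at hrec ⊢
  rw [sum_congr rfl fun r _ => by rw [add_assoc, one_add_one_eq_two, htel r],
    sum_range_sub']
  simp only [t, h₀, h₁]
  linear_combination (-3 / 4 : ℝ) * hrec

theorem coeff_succ_kernelSeries_self (m : ℕ) :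
    coeff (m + 1) (kernelSeries m)
      = (descPochhammer ℝ (m + 1)).eval (exponent m) / (m + 1).factorial * √17 ^ (m + 1) := by
  rw [kernelSeries, coeff_succ_binomSeries_mul_of_add_eq (by ring), neg_sub_neg, lam₂_sub_lam₁]

theorem sum_choose_div_exponent_sub (m : ℕ) :
    ∑ k ∈ range (m + 1), m.choose k * (-lam₁) ^ k * lam₂ ^ (m - k) / (exponent m - k)
      = -√17 ^ (m + 1) * paperDelta m := by
  rw [paperDelta, mul_sum, ← sum_range_reflect]
  refine sum_congr rfl fun k hk => ?_
  have hk : k ≤ m := Nat.lt_succ_iff.mp (mem_range.mp hk)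
  rw [show m + 1 - 1 - k = m - k by omega, show m - (m - k) = k by omega, Nat.choose_symm hk,
    Nat.cast_sub hk, show (3 - √17) / 2 = lam₁ from rfl, show (3 + √17) / 2 = lam₂ from rfl]
  have hden : k * lam₁ + (m - k) * lam₂ - (m - 4) = -(√17 * (exponent m - (m - k))) := by
    linear_combination exponent_mul_sqrt m + (m - k) * lam₂_sub_lam₁ + m * lam₁_add_lam₂
  have hAk : exponent m - (m - k) ≠ 0 := by
    rw [← Nat.cast_sub hk]; exact sub_ne_zero.mpr (exponent_ne_natCast m _)
  rw [hden, div_pow, div_pow, pow_succ, ← pow_sub_mul_pow √17 hk]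
  field_simp

theorem coeff_kernelSeries_self (m : ℕ) :
    coeff m (kernelSeries m)
      = -((descPochhammer ℝ (m + 1)).eval (exponent m) / m.factorial * √17 ^ (m + 1)
        * paperDelta m) := by
  rw [kernelSeries, coeff_binomSeries_mul_of_add_eq (by ring) (fun k _ => exponent_ne_natCast m k),
    neg_neg, sum_choose_div_exponent_sub]
  ring

theorem descPochhammer_eval_exponent_ne_zero (m n : ℕ) :
    (descPochhammer ℝ n).eval (exponent m) ≠ 0 := by
  rw [descPochhammer_eval_eq_prod_range]
  exact prod_ne_zero_iff.mpr fun k _ => sub_ne_zero.mpr (exponent_ne_natCast m k)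

/-- Row `m - 2 - n` of `B_m(3)` on a vector read backwards from `w`. Index `0` of `w` lies just past
the last column, so `w 0 = 0` lets the last row follow the same three-term pattern. -/
theorem mulVec_paperB3_rev_apply (m n : ℕ) (hn : n + 3 ≤ m) (w : ℕ → ℝ) (hw : w 0 = 0) :
    (paperB3 m *ᵥ fun j => w (m - 1 - j)) ⟨m - 2 - n, by omega⟩
      = (n + 1) * w (n + 2) + (2 * m + 4 - 3 * n) * w (n + 1) + 2 * (m + 1 - n) * w n := by
  have hi : ((m - 2 - n : ℕ) : ℝ) = m - 2 - n := by
    rw [Nat.cast_sub (by omega), Nat.cast_sub (by omega)]; push_cast; ring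
  have hterm : ∀ j : ℕ, (if m - 2 - n = 0 then (j : ℝ) + 3
      else if m - 2 - n = j then 3 * ((m - 2 - n : ℕ) : ℝ) + 10 - m
      else if m - 2 - n = j + 1 then (m : ℝ) - 1 - ((m - 2 - n : ℕ) : ℝ)
      else if j = m - 2 - n + 1 then 2 * (((m - 2 - n : ℕ) : ℝ) + 3) else 0) * w (m - 1 - j)
      = (if j = m - 3 - n then (n + 1) * w (n + 2) else 0)
        + (if j = m - 2 - n then (2 * m + 4 - 3 * n) * w (n + 1) else 0)
        + (if j = m - 1 - n then 2 * (m + 1 - n) * w n else 0) := by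
    intro j
    rw [if_neg (by omega), hi]
    split_ifs <;> first
      | (exfalso; omega)
      | (rw [show m - 1 - j = n + 2 by omega]; ring)
      | (rw [show m - 1 - j = n + 1 by omega]; ring)
      | (rw [show m - 1 - j = n by omega]; ring)
      | simp
  simp only [mulVec, dotProduct, paperB3, of_apply, hterm]
  rw [Fin.sum_univ_eq_sum_range (fun j => (if j = m - 3 - n then (n + 1 : ℝ) * w (n + 2) else 0)
        + (if j = m - 2 - n then (2 * m + 4 - 3 * n : ℝ) * w (n + 1) else 0)
        + (if j = m - 1 - n then 2 * (m + 1 - n : ℝ) * w n else 0)),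
    sum_add_distrib, sum_add_distrib, sum_ite_eq', sum_ite_eq', sum_ite_eq']
  rw [if_pos (mem_range.mpr (by omega)), if_pos (mem_range.mpr (by omega))]
  split_ifs with hlast
  · rfl
  · obtain rfl : n = 0 := by rw [mem_range] at hlast; omega
    simp [hw]

theorem mulVec_paperB3_rev_apply_zero (m : ℕ) (hm : 2 ≤ m) (w : ℕ → ℝ) :
    (paperB3 m *ᵥ fun j => w (m - 1 - j)) ⟨0, by omega⟩
      = ∑ j ∈ range (m - 1), ((j : ℝ) + 3) * w (m - 1 - j) := by
  simp only [mulVec, dotProduct, paperB3, of_apply, if_pos]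
  exact Fin.sum_univ_eq_sum_range (fun j => ((j : ℝ) + 3) * w (m - 1 - j)) _

theorem mulVec_paperB3_kernelSeq_apply_zero (m : ℕ) (hm : 2 ≤ m) :
    (paperB3 m *ᵥ fun j => kernelSeq m (m - 1 - j)) ⟨0, by omega⟩
      = (descPochhammer ℝ (m + 1)).eval (exponent m) / m.factorial * √17 ^ (m + 1)
        * ((m - 3) * paperDelta m + 3 / 4) := by
  have hreflect : ∑ j ∈ range (m - 1), ((j : ℝ) + 3) * kernelSeq m (m - 1 - j)
      = ∑ r ∈ range (m - 1), ((m : ℝ) + 1 - r) * coeff r (kernelSeries m) := by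
    rw [← sum_range_reflect]
    refine sum_congr rfl fun r hr => ?_
    have hr : r < m - 1 := mem_range.mp hr
    rw [kernelSeq, show m - 1 - (m - 1 - 1 - r) = r + 1 by omega, coeff_succ_X_mul,
      Nat.cast_sub (by omega), Nat.cast_sub (by omega), Nat.cast_sub (by omega)]
    push_cast
    ring
  rw [mulVec_paperB3_rev_apply_zero m hm, hreflect, sum_range_mul_coeff_kernelSeries m (by omega),
    coeff_succ_kernelSeries_self, coeff_kernelSeries_self, Nat.factorial_succ, Nat.cast_mul]
  push_cast
  field_simp
  ring

theorem mulVec_paperB3_kernelSeq_apply_of_ne_zero (m : ℕ) (i : Fin (m - 1)) (hi : (i : ℕ) ≠ 0) :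
    (paperB3 m *ᵥ fun j => kernelSeq m (m - 1 - j)) i = 0 := by
  obtain ⟨i, hi'⟩ := i
  obtain ⟨n, rfl⟩ : ∃ n, i = m - 2 - n := ⟨m - 2 - i, by omega⟩
  rw [mulVec_paperB3_rev_apply m n (by simp at hi; omega) _ (by simp [kernelSeq])]
  exact kernelSeq_recurrence m n

theorem eq_smul_kernelSeq_of_mulVec_paperB3 (m : ℕ) (hm : 2 ≤ m) (z : Fin (m - 1) → ℝ)
    (hz : ∀ i ≠ ⟨0, by omega⟩, (paperB3 m *ᵥ z) i = 0) :
    ∃ c : ℝ, z = c • fun j : Fin (m - 1) => kernelSeq m (m - 1 - j) := by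
  let w k : ℝ := if h : 0 < k ∧ k ≤ m - 1 then z ⟨m - 1 - k, by omega⟩ else 0
  have hzw : z = fun j : Fin (m - 1) => w (m - 1 - j) := funext fun j => by
    simp only [w, dif_pos (show 0 < m - 1 - (j : ℕ) ∧ m - 1 - (j : ℕ) ≤ m - 1 by omega)]
    congr
    ext
    simp only
    omega
  have hw : ∀ n, n + 2 ≤ m - 1 → (n + 1) * w (n + 2) + (2 * m + 4 - 3 * n) * w (n + 1)
      + 2 * (m + 1 - n) * w n = 0 := fun n hn => by
    rw [← mulVec_paperB3_rev_apply m n (by omega) w (by simp [w]), ← hzw]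
    exact hz _ (by simp only [ne_eq, Fin.ext_iff]; omega)
  have hW : ∀ n, n + 2 ≤ m - 1 → (n + 1) * (w 1 * kernelSeq m (n + 2))
      + (2 * m + 4 - 3 * n) * (w 1 * kernelSeq m (n + 1))
      + 2 * (m + 1 - n) * (w 1 * kernelSeq m n) = 0 := fun n _ => by
    linear_combination w 1 * kernelSeq_recurrence m n
  have hwW := eq_of_linear_recurrence (g := fun k => w 1 * kernelSeq m k)
    (fun n _ => by positivity) hw hW
    (by simp [w, kernelSeq]) (by simp [kernelSeq, coeff_zero_kernelSeries])
  refine ⟨w 1, funext fun j => ?_⟩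
  rw [hzw]
  exact hwW _ (by omega)

theorem kernelSeq_rev_ne_zero (m : ℕ) (hm : 2 ≤ m) :
    (fun j : Fin (m - 1) => kernelSeq m (m - 1 - j)) ≠ 0 := by
  intro h
  have := congrFun h ⟨m - 2, by omega⟩
  simp only [show m - 1 - (m - 2) = 0 + 1 by omega, kernelSeq, coeff_succ_X_mul,
    coeff_zero_kernelSeries, Pi.zero_apply] at this
  exact one_ne_zero this

end PaperB3

open PaperB3

/-- `det B_m(3) ≠ 0` if and only if `Δ(m)⁻¹ ≠ -(4/3)(m-3)`, i.e.
`(-4/3)·(m-3)·Δ(m) ≠ 1`. -/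
theorem det_paperB3_ne_zero_iff (m : ℕ) (hm : 4 ≤ m) :
    (paperB3 m).det ≠ 0 ↔ (-(4 / 3)) * ((m : ℝ) - 3) * paperDelta m ≠ 1 := by
  have hm₂ : 2 ≤ m := by omega
  rw [Ne, det_eq_zero_iff_mulVec_apply_eq_zero _ (kernelSeq_rev_ne_zero m hm₂)
      (fun i hi => mulVec_paperB3_kernelSeq_apply_of_ne_zero m i (by simpa [Fin.ext_iff] using hi))
      (eq_smul_kernelSeq_of_mulVec_paperB3 m hm₂),
    mulVec_paperB3_kernelSeq_apply_zero m hm₂, mul_eq_zero, or_iff_right (by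
      have := descPochhammer_eval_exponent_ne_zero m (m + 1)
      positivity)]
  constructor
  · exact fun h h' => h (by linear_combination (-3 / 4 : ℝ) * h')
  · exact fun h h' => h (by linear_combination (-4 / 3 : ℝ) * h')
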